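/- Let f : R^d → R be L-smooth, x, δ ∈ R^d, and g a random vector with E[g] = ∇f(x+δ) and E[‖g−∇f(x+δ)‖²] ≤ σ². Then E[f(x − ηg)] ≤ f(x) − (η/2)‖∇f(x)‖² − (η/2)(1 − Lη)‖∇f(x+δ)‖² + (η/2)‖∇f(x) − ∇f(x+δ)‖² + (Lη²σ²)/2. -/

import Mathlib

/-!
Along the segment from `x` to `x + v`, an `L`-Lipschitz gradient keeps `f` below the quadratic
`f x + ⟪∇f x, v⟫ + L/2 ‖v‖²`. Applied to `v = -η g` and averaged, this bounds `E f(x - η g)` by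
`f x - η ⟪∇f x, E g⟫ + L η²/2 E‖g‖²`. The bias–variance split
`E‖g‖² = E‖g - E g‖² + ‖E g‖² ≤ σ² + ‖∇f(x+δ)‖²` and the polarization identity
`2⟪a, b⟫ = ‖a‖² + ‖b‖² - ‖a - b‖²` turn this into the stated bound.
-/

open MeasureTheory

section

variable {E : Type*} [NormedAddCommGroup E] [InnerProductSpace ℝ E]
  {Ω : Type*} [MeasurableSpace Ω] {μ : Measure Ω} {g : Ω → E}

theorem norm_sq_eq_norm_sub_sq_add_inner_add_norm_sq (a m : E) :
    ‖a‖ ^ 2 = ‖a - m‖ ^ 2 + 2 * inner ℝ m (a - m) + ‖m‖ ^ 2 := by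
  have h := norm_add_sq_real (a - m) m
  rwa [sub_add_cancel, real_inner_comm] at h

theorem integrable_norm_sq_of_integrable_norm_sub_sq [IsFiniteMeasure μ] {m : E}
    (hg : Integrable g μ) (hvar : Integrable (fun ω => ‖g ω - m‖ ^ 2) μ) :
    Integrable (fun ω => ‖g ω‖ ^ 2) μ := by
  rw [funext fun ω => norm_sq_eq_norm_sub_sq_add_inner_add_norm_sq (g ω) m]
  exact (hvar.add (((hg.sub (integrable_const m)).const_inner m).const_mul 2)).add
    (integrable_const _)

variable [CompleteSpace E] {f : E → ℝ} {L : ℝ}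

theorem hasDerivAt_comp_add_smul (hf : Differentiable ℝ f) (x v : E) (t : ℝ) :
    HasDerivAt (fun s : ℝ => f (x + s • v)) (inner ℝ (gradient f (x + t • v)) v) t := by
  have hline : HasDerivAt (fun s : ℝ => x + s • v) v t := by
    simpa using ((hasDerivAt_id t).smul_const v).const_add x
  rw [inner_gradient_left]
  exact (hf (x + t • v)).hasFDerivAt.comp_hasDerivAt t hline

theorem inner_gradient_add_smul_sub_le
    (hlip : ∀ x y, ‖gradient f x - gradient f y‖ ≤ L * ‖x - y‖) (x v : E) {t : ℝ} (ht : 0 ≤ t) :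
    inner ℝ (gradient f (x + t • v) - gradient f x) v ≤ L * t * ‖v‖ ^ 2 :=
  calc _ ≤ ‖gradient f (x + t • v) - gradient f x‖ * ‖v‖ := real_inner_le_norm _ _
    _ ≤ L * ‖t • v‖ * ‖v‖ := by gcongr; simpa using hlip (x + t • v) x
    _ = L * t * ‖v‖ ^ 2 := by rw [norm_smul, Real.norm_of_nonneg ht]; ring

theorem le_add_inner_gradient_add_sq (hf : Differentiable ℝ f)
    (hlip : ∀ x y, ‖gradient f x - gradient f y‖ ≤ L * ‖x - y‖) (x v : E) :
    f (x + v) ≤ f x + inner ℝ (gradient f x) v + L / 2 * ‖v‖ ^ 2 := by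
  set ψ : ℝ → ℝ := fun t =>
    f (x + t • v) - t * inner ℝ (gradient f x) v - L * t ^ 2 / 2 * ‖v‖ ^ 2
  have hψ : ∀ t, HasDerivAt ψ
      (inner ℝ (gradient f (x + t • v) - gradient f x) v - L * t * ‖v‖ ^ 2) t := by
    intro t
    have hlin : HasDerivAt (fun s : ℝ => s * inner ℝ (gradient f x) v)
        (inner ℝ (gradient f x) v) t := by
      simpa using (hasDerivAt_id t).mul_const (inner ℝ (gradient f x) v)
    have hquad : HasDerivAt (fun s : ℝ => L * s ^ 2 / 2 * ‖v‖ ^ 2) (L * t * ‖v‖ ^ 2) t :=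
      ((((hasDerivAt_pow 2 t).const_mul L).div_const 2).mul_const (‖v‖ ^ 2)).congr_deriv
        (by push_cast; ring)
    rw [inner_sub_left]
    exact ((hasDerivAt_comp_add_smul hf x v t).sub hlin).sub hquad
  have hanti : AntitoneOn ψ (Set.Icc 0 1) :=
    antitoneOn_of_deriv_nonpos (convex_Icc 0 1)
      (fun t _ => (hψ t).continuousAt.continuousWithinAt)
      (fun t _ => (hψ t).differentiableAt.differentiableWithinAt)
      fun t ht => by
        rw [interior_Icc] at ht
        rw [(hψ t).deriv]
        linarith [inner_gradient_add_smul_sub_le hlip x v ht.1.le]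
  have hψ10 := hanti (Set.left_mem_Icc.2 zero_le_one) (Set.right_mem_Icc.2 zero_le_one)
    zero_le_one
  simp only [ψ, zero_smul, one_smul, add_zero, zero_mul, one_mul, sub_zero] at hψ10
  linarith

theorem le_sub_smul_inner_gradient_add_sq (hf : Differentiable ℝ f)
    (hlip : ∀ x y, ‖gradient f x - gradient f y‖ ≤ L * ‖x - y‖) (x g : E) (η : ℝ) :
    f (x - η • g) ≤ f x - η * inner ℝ (gradient f x) g + L * η ^ 2 / 2 * ‖g‖ ^ 2 := by
  have h := le_add_inner_gradient_add_sq hf hlip x (-(η • g))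
  rw [← sub_eq_add_neg, inner_neg_right, inner_smul_right, norm_neg, norm_smul, mul_pow,
    Real.norm_eq_abs, sq_abs] at h
  linarith

variable [IsProbabilityMeasure μ]

theorem integral_norm_sq_eq_integral_norm_sub_sq_add
    (hg : Integrable g μ) (hvar : Integrable (fun ω => ‖g ω - ∫ ω, g ω ∂μ‖ ^ 2) μ) :
    ∫ ω, ‖g ω‖ ^ 2 ∂μ = ∫ ω, ‖g ω - ∫ ω, g ω ∂μ‖ ^ 2 ∂μ + ‖∫ ω, g ω ∂μ‖ ^ 2 := by
  set m := ∫ ω, g ω ∂μ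
  have hcentered : Integrable (fun ω => g ω - m) μ := hg.sub (integrable_const m)
  have hcross : ∫ ω, inner ℝ m (g ω - m) ∂μ = 0 := by
    rw [integral_inner hcentered, integral_sub hg (integrable_const m), integral_const]
    simp [m]
  have hcross_int : Integrable (fun ω => 2 * inner ℝ m (g ω - m)) μ :=
    (hcentered.const_inner m).const_mul 2
  have hsum_int : Integrable (fun ω => ‖g ω - m‖ ^ 2 + 2 * inner ℝ m (g ω - m)) μ :=
    hvar.add hcross_int
  rw [funext fun ω => norm_sq_eq_norm_sub_sq_add_inner_add_norm_sq (g ω) m,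
    integral_add hsum_int (integrable_const _), integral_add hvar hcross_int,
    integral_const_mul, hcross]
  simp

theorem integral_comp_sub_smul_le (hf : Differentiable ℝ f)
    (hlip : ∀ x y, ‖gradient f x - gradient f y‖ ≤ L * ‖x - y‖)
    (hg : Integrable g μ) (hg_sq : Integrable (fun ω => ‖g ω‖ ^ 2) μ) {x : E} {η : ℝ}
    (hf_int : Integrable (fun ω => f (x - η • g ω)) μ) :
    ∫ ω, f (x - η • g ω) ∂μ ≤
      f x - η * inner ℝ (gradient f x) (∫ ω, g ω ∂μ) + L * η ^ 2 / 2 * ∫ ω, ‖g ω‖ ^ 2 ∂μ := by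
  have hinner : Integrable (fun ω => η * inner ℝ (gradient f x) (g ω)) μ :=
    (hg.const_inner _).const_mul η
  have hlinear : Integrable (fun ω => f x - η * inner ℝ (gradient f x) (g ω)) μ :=
    (integrable_const _).sub hinner
  calc ∫ ω, f (x - η • g ω) ∂μ
      ≤ ∫ ω, (f x - η * inner ℝ (gradient f x) (g ω) + L * η ^ 2 / 2 * ‖g ω‖ ^ 2) ∂μ :=
        integral_mono hf_int (hlinear.add (hg_sq.const_mul _))
          fun ω => le_sub_smul_inner_gradient_add_sq hf hlip x (g ω) η
    _ = _ := by
        rw [integral_add hlinear (hg_sq.const_mul _),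
          integral_sub (integrable_const _) hinner, integral_const_mul, integral_const_mul,
          integral_inner hg]
        simp

end

theorem descent_intermediate_general (d : ℕ) (f : EuclideanSpace ℝ (Fin d) → ℝ) (L σ η : ℝ)
    (hL : 0 < L) (hdiff : Differentiable ℝ f)
    (hlip : ∀ x y, ‖gradient f x - gradient f y‖ ≤ L * ‖x - y‖)
    {Ω : Type*} [MeasurableSpace Ω] (μ : Measure Ω) [IsProbabilityMeasure μ]
    (g : Ω → EuclideanSpace ℝ (Fin d)) (x δ : EuclideanSpace ℝ (Fin d))
    (hg_int : Integrable g μ)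
    (hg_sq_int : Integrable (fun ω => ‖g ω - gradient f (x + δ)‖ ^ 2) μ)
    (hf_int : Integrable (fun ω => f (x - η • g ω)) μ)
    (hmean : ∫ ω, g ω ∂μ = gradient f (x + δ))
    (hvar : ∫ ω, ‖g ω - gradient f (x + δ)‖ ^ 2 ∂μ ≤ σ ^ 2) :
    ∫ ω, f (x - η • g ω) ∂μ ≤
      f x - (η / 2) * ‖gradient f x‖ ^ 2
        - (η / 2) * (1 - L * η) * ‖gradient f (x + δ)‖ ^ 2
        + (η / 2) * ‖gradient f x - gradient f (x + δ)‖ ^ 2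
        + L * η ^ 2 * σ ^ 2 / 2 := by
  have hdescent := integral_comp_sub_smul_le hdiff hlip hg_int
    (integrable_norm_sq_of_integrable_norm_sub_sq hg_int hg_sq_int) hf_int
  rw [integral_norm_sq_eq_integral_norm_sub_sq_add hg_int (hmean ▸ hg_sq_int), hmean] at hdescent
  have hnoise : L * η ^ 2 / 2 * ∫ ω, ‖g ω - gradient f (x + δ)‖ ^ 2 ∂μ ≤
      L * η ^ 2 / 2 * σ ^ 2 := by
    gcongr
  have hpolar := norm_sub_sq_real (gradient f x) (gradient f (x + δ))
  linear_combination hdescent + hnoise - η / 2 * hpolar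

theorem descent_intermediate (d : ℕ) (f : EuclideanSpace ℝ (Fin d) → ℝ) (L σ η : ℝ)
    (hL : 0 < L) (hdiff : Differentiable ℝ f)
    (hlip : ∀ x y, ‖gradient f x - gradient f y‖ ≤ L * ‖x - y‖)
    {Ω : Type*} [MeasurableSpace Ω] (μ : Measure Ω) [IsProbabilityMeasure μ]
    (g : Ω → EuclideanSpace ℝ (Fin d)) (x δ : EuclideanSpace ℝ (Fin d))
    (hg_int : Integrable g μ)
    (hg_sq_int : Integrable (fun ω => ‖g ω - gradient f (x + δ)‖ ^ 2) μ)
    (hf_int : Integrable (fun ω => f (x - η • g ω)) μ)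
    (hmean : ∫ ω, g ω ∂μ = gradient f (x + δ))
    (hvar : ∫ ω, ‖g ω - gradient f (x + δ)‖ ^ 2 ∂μ ≤ σ ^ 2)
    (hη : 0 < η) :
    ∫ ω, f (x - η • g ω) ∂μ ≤
      f x - (η / 2) * ‖gradient f x‖ ^ 2
        - (η / 2) * (1 - L * η) * ‖gradient f (x + δ)‖ ^ 2
        + (η / 2) * ‖gradient f x - gradient f (x + δ)‖ ^ 2
        + L * η ^ 2 * σ ^ 2 / 2 :=
  descent_intermediate_general d f L σ η hL hdiff hlip μ g x δ hg_int hg_sq_int hf_int hmean hvar
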